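/- The K[x]-dual Hom_{K[x]}(Λ, K[x]), regarded as a left Λ-module via (λ·f)(µ) := f(µ·λ), is a free left Λ-module of rank 1, i.e., it is isomorphic to Λ as a left Λ-module. In particular, Hom_{K[x]}(Λ, K[x]) is a projective left Λ-module, so Λ is a Gorenstein order. -/

import Mathlib

set_option synthInstance.maxHeartbeats 1000000
set_option maxHeartbeats 1000000

open Polynomial Matrix

noncomputable section

def cExp (n : ℕ) (i j : Fin n) : ℤ :=
  (if (j : ℕ) < (i : ℕ) then 1 else 0) + (if (j : ℕ) + 1 < (i : ℕ) then 1 else 0)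
    - (if (i : ℕ) = 0 ∧ (j : ℕ) = n - 1 then 1 else 0)

def xPow (K : Type*) [Field K] (c : ℤ) : Set (RatFunc K) :=
  {f | ∃ p : Polynomial K, f = RatFunc.X ^ c * algebraMap (Polynomial K) (RatFunc K) p}

def lambdaCarrier (K : Type*) [Field K] (n : ℕ) : Set (Matrix (Fin n) (Fin n) (RatFunc K)) :=
  {M | ∀ i j, M i j ∈ xPow K (cExp n i j)}

section Dual

variable {K : Type} [Field K] {n : ℕ}
variable (Λ : Subalgebra (Polynomial K) (Matrix (Fin n) (Fin n) (RatFunc K)))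

/-- The action `(λ·f)(u) := f(u·λ)` of `Λ` on the `K[x]`-dual of `Λ`. -/
def dualSmul (a : ↥Λ) (f : ↥Λ →ₗ[Polynomial K] Polynomial K) :
    ↥Λ →ₗ[Polynomial K] Polynomial K where
  toFun u := f (u * a)
  map_add' u w := by (try simp only []); rw [add_mul, map_add]
  map_smul' p u := by (try simp only []); rw [RingHom.id_apply, smul_mul_assoc, _root_.map_smul]

/-- The `K[x]`-dual `Hom_{K[x]}(Λ, K[x])` is a left `Λ`-module via `(λ·f)(u) := f(u·λ)`. -/
instance dualModule : Module ↥Λ (↥Λ →ₗ[Polynomial K] Polynomial K) where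
  smul := dualSmul Λ
  one_smul f := LinearMap.ext fun u => by
    show f (u * 1) = f u
    rw [mul_one]
  mul_smul a b f := LinearMap.ext fun u => by
    show f (u * (a * b)) = f (u * a * b)
    rw [mul_assoc]
  smul_zero a := LinearMap.ext fun _ => rfl
  smul_add a f g := LinearMap.ext fun _ => rfl
  add_smul a b f := LinearMap.ext fun u => by
    show f (u * (a + b)) = f (u * a) + f (u * b)
    rw [mul_add, map_add]
  zero_smul f := LinearMap.ext fun u => by
    show f (u * 0) = 0
    rw [mul_zero, map_zero]

end Dual

/-!
The form `t : Λ → K[x]` picking out the coefficients of the basis vectors `x^{c_{l+2,l}} E_{l+2,l}`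
(indices mod `n`) is a Frobenius form for `Λ`: in the `K[x]`-basis `e_{ij} = x^{c_{ij}} E_{ij}` one has
`e_{uv} e_{kl} = δ_{vk} x^{c_{uk} + c_{kl} - c_{ul}} e_{ul}`, and since
`c_{l+2,k} + c_{kl} = c_{l+2,l}` for every `k`, the Gram matrix of `(μ, λ) ↦ t(μλ)` is a permutation
matrix. Hence `λ ↦ t(- · λ)` is a `K[x]`-isomorphism `Λ ≅ Hom_{K[x]}(Λ, K[x])`, and it is `Λ`-linear
for the given action by associativity.
-/

section Exponents

variable {n : ℕ}

lemma cExp_le_add (hn : 2 ≤ n) (i j l : Fin n) : cExp n i l ≤ cExp n i j + cExp n j l := by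
  have := i.isLt; have := j.isLt; have := l.isLt
  simp only [cExp]
  split_ifs <;> omega

def mulExp (n : ℕ) (i j l : Fin n) : ℕ := (cExp n i j + cExp n j l - cExp n i l).toNat

lemma mulExp_cast (hn : 2 ≤ n) (i j l : Fin n) :
    (mulExp n i j l : ℤ) = cExp n i j + cExp n j l - cExp n i l :=
  Int.toNat_of_nonneg (by linarith [cExp_le_add hn i j l])

def rotTwo (l : Fin n) : Fin n := ⟨((l : ℕ) + 2) % n, Nat.mod_lt _ l.pos⟩

lemma val_rotTwo (hn : 2 ≤ n) (l : Fin n) :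
    (rotTwo l : ℕ) = if (l : ℕ) + 2 < n then (l : ℕ) + 2 else (l : ℕ) + 2 - n := by
  have := l.isLt
  split_ifs with h
  · exact Nat.mod_eq_of_lt h
  · change ((l : ℕ) + 2) % n = _
    rw [Nat.mod_eq_sub_mod (by omega), Nat.mod_eq_of_lt (by omega)]

lemma rotTwo_injective (hn : 2 ≤ n) : Function.Injective (rotTwo (n := n)) := by
  intro a b hab
  have ha := val_rotTwo hn a
  have hb := val_rotTwo hn b
  rw [hab] at ha
  ext
  split_ifs at ha hb <;> omega

def rotTwoEquiv (hn : 2 ≤ n) : Fin n ≃ Fin n :=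
  .ofBijective rotTwo (Finite.injective_iff_bijective.mp (rotTwo_injective hn))

lemma mulExp_rotTwo (hn : 3 ≤ n) (k l : Fin n) : mulExp n (rotTwo l) k l = 0 := by
  have := k.isLt; have := l.isLt
  have h := val_rotTwo (by omega) l
  have h' := mulExp_cast (by omega) (rotTwo l) k l
  simp only [cExp] at h'
  split_ifs at h h' <;> omega

end Exponents

section Basis

variable {K : Type} [Field K] {n : ℕ}

variable (K n) in
def scaledSingle (q : Fin n × Fin n) : Matrix (Fin n) (Fin n) (RatFunc K) :=
  single q.1 q.2 (RatFunc.X ^ cExp n q.1 q.2)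

lemma sum_smul_scaledSingle_apply (g : Fin n × Fin n → K[X]) (i j : Fin n) :
    (∑ q, g q • scaledSingle K n q) i j
      = RatFunc.X ^ cExp n i j * algebraMap K[X] (RatFunc K) (g (i, j)) := by
  rw [Matrix.sum_apply, Finset.sum_eq_single (i, j)]
  · simp [scaledSingle, Algebra.smul_def, mul_comm]
  · rintro ⟨k, l⟩ - hkl
    simp only [Matrix.smul_apply, scaledSingle]
    rw [Matrix.single_apply_of_ne, smul_zero]
    grind
  · simp

variable {Λ : Subalgebra K[X] (Matrix (Fin n) (Fin n) (RatFunc K))}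
  (hΛ : (Λ : Set (Matrix (Fin n) (Fin n) (RatFunc K))) = lambdaCarrier K n)
include hΛ

lemma sum_smul_scaledSingle_mem (g : Fin n × Fin n → K[X]) :
    ∑ q, g q • scaledSingle K n q ∈ Λ := by
  rw [← SetLike.mem_coe, hΛ]
  exact fun i j => ⟨g (i, j), sum_smul_scaledSingle_apply g i j⟩

lemma scaledSingle_mem (q : Fin n × Fin n) : scaledSingle K n q ∈ Λ := by
  simpa [Pi.single_apply] using sum_smul_scaledSingle_mem hΛ (Pi.single q 1)

def lambdaUnit (q : Fin n × Fin n) : Λ :=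
  ⟨scaledSingle K n q, scaledSingle_mem hΛ q⟩

lemma coe_sum_smul_lambdaUnit (g : Fin n × Fin n → K[X]) :
    ((∑ q, g q • lambdaUnit hΛ q : Λ) : Matrix (Fin n) (Fin n) (RatFunc K))
      = ∑ q, g q • scaledSingle K n q := by
  simp [lambdaUnit]

lemma linearIndependent_lambdaUnit : LinearIndependent K[X] (lambdaUnit hΛ) := by
  refine Fintype.linearIndependent_iff.mpr fun g hg ⟨i, j⟩ => ?_
  have hij := congrFun (congrFun (congrArg Subtype.val hg) i) j
  rw [coe_sum_smul_lambdaUnit, sum_smul_scaledSingle_apply] at hij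
  simpa [zpow_ne_zero, RatFunc.X_ne_zero] using hij

lemma span_lambdaUnit : ⊤ ≤ Submodule.span K[X] (Set.range (lambdaUnit hΛ)) := by
  rintro ⟨M, hM⟩ -
  rw [← SetLike.mem_coe, hΛ] at hM
  choose g hg using hM
  refine Submodule.mem_span_range_iff_exists_fun K[X] |>.mpr ⟨fun q => g q.1 q.2, ?_⟩
  ext i j
  rw [coe_sum_smul_lambdaUnit, sum_smul_scaledSingle_apply]
  exact (hg i j).symm

lemma lambdaUnit_mul_lambdaUnit (hn : 2 ≤ n) (i j l : Fin n) :
    lambdaUnit hΛ (i, j) * lambdaUnit hΛ (j, l)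
      = (X ^ mulExp n i j l : K[X]) • lambdaUnit hΛ (i, l) := by
  apply Subtype.ext
  change single i j _ * single j l _ = (X ^ _ : K[X]) • single i l _
  rw [single_mul_single_same, smul_single, Algebra.smul_def, map_pow, RatFunc.algebraMap_X,
    ← zpow_natCast, ← zpow_add₀ RatFunc.X_ne_zero, ← zpow_add₀ RatFunc.X_ne_zero, mulExp_cast hn]
  congr 2
  ring

lemma lambdaUnit_mul_lambdaUnit_of_ne {i j k l : Fin n} (hjk : j ≠ k) :
    lambdaUnit hΛ (i, j) * lambdaUnit hΛ (k, l) = 0 :=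
  Subtype.ext (single_mul_single_of_ne _ _ _ _ hjk _)

def lambdaBasis : Module.Basis (Fin n × Fin n) K[X] Λ :=
  .mk (linearIndependent_lambdaUnit hΛ) (span_lambdaUnit hΛ)

lemma lambdaBasis_apply (q : Fin n × Fin n) : lambdaBasis hΛ q = lambdaUnit hΛ q :=
  congrFun (Module.Basis.coe_mk _ _) q

end Basis

section FormDual

variable {K : Type} [Field K] {n : ℕ} (Λ : Subalgebra K[X] (Matrix (Fin n) (Fin n) (RatFunc K)))

def formDual (t : Λ →ₗ[K[X]] K[X]) : Λ →ₗ[K[X]] (Λ →ₗ[K[X]] K[X]) :=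
  (LinearMap.mul K[X] Λ).flip.compr₂ t

lemma formDual_apply (t : Λ →ₗ[K[X]] K[X]) (a μ : Λ) : formDual Λ t a μ = t (μ * a) := rfl

def formDualHom (t : Λ →ₗ[K[X]] K[X]) : Λ →ₗ[Λ] (Λ →ₗ[K[X]] K[X]) where
  toFun := formDual Λ t
  map_add' := map_add _
  map_smul' a b := LinearMap.ext fun μ => congrArg t (mul_assoc μ a b).symm

lemma formDual_bijective {ι : Type*} [Fintype ι] [DecidableEq ι]
    (b : Module.Basis ι K[X] Λ) (τ : ι ≃ ι) (t : Λ →ₗ[K[X]] K[X])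
    (ht : ∀ q r, t (b r * b q) = if r = τ q then 1 else 0) :
    Function.Bijective (formDual Λ t) := by
  have : formDual Λ t = (b.equiv b.dualBasis τ).toLinearMap :=
    b.ext fun q => b.ext fun r => by
      rw [LinearEquiv.coe_coe, Module.Basis.equiv_apply, Module.Basis.dualBasis_apply_self,
        formDual_apply, ht]
  rw [this]
  exact (b.equiv b.dualBasis τ).bijective

end FormDual

section Frobenius

variable {K : Type} [Field K] {n : ℕ} {Λ : Subalgebra K[X] (Matrix (Fin n) (Fin n) (RatFunc K))}
  (hΛ : (Λ : Set (Matrix (Fin n) (Fin n) (RatFunc K))) = lambdaCarrier K n)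

def frobeniusForm : Λ →ₗ[K[X]] K[X] :=
  ∑ l, (lambdaBasis hΛ).dualBasis (rotTwo l, l)

lemma frobeniusForm_lambdaUnit (u l : Fin n) :
    frobeniusForm hΛ (lambdaUnit hΛ (u, l)) = if u = rotTwo l then 1 else 0 := by
  rw [frobeniusForm, LinearMap.sum_apply, ← lambdaBasis_apply]
  simp only [Module.Basis.dualBasis_apply_self]
  rw [Finset.sum_eq_single l (fun x _ hxl => if_neg (by grind)) (by simp)]
  simp

lemma frobeniusForm_mul (hn : 3 ≤ n) (u v k l : Fin n) :
    frobeniusForm hΛ (lambdaUnit hΛ (u, v) * lambdaUnit hΛ (k, l))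
      = if (u, v) = (rotTwo l, k) then 1 else 0 := by
  by_cases hvk : v = k
  · subst hvk
    rw [lambdaUnit_mul_lambdaUnit hΛ (by omega), map_smul, frobeniusForm_lambdaUnit]
    by_cases hu : u = rotTwo l
    · simp [hu, mulExp_rotTwo hn]
    · simp [hu]
  · rw [lambdaUnit_mul_lambdaUnit_of_ne hΛ hvk, map_zero, if_neg (by grind)]

lemma formDual_frobeniusForm_bijective (hn : 3 ≤ n) :
    Function.Bijective (formDual Λ (frobeniusForm hΛ)) :=
  formDual_bijective Λ (lambdaBasis hΛ)
    ((Equiv.prodComm _ _).trans ((rotTwoEquiv (by omega)).prodCongr (.refl _)))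
    (frobeniusForm hΛ) fun ⟨k, l⟩ ⟨u, v⟩ => by
      simpa [lambdaBasis_apply, rotTwoEquiv] using frobeniusForm_mul hΛ hn u v k l

end Frobenius

/-- The `K[x]`-dual `Hom_{K[x]}(Λ, K[x])`, regarded as a left `Λ`-module via
`(λ·f)(u) := f(u·λ)`, is a free left `Λ`-module of rank `1`, i.e. isomorphic to `Λ` as a left
`Λ`-module; in particular it is a projective left `Λ`-module, so `Λ` is a Gorenstein order. -/
theorem statement11 (K : Type) [Field K] (n : ℕ) (hn : 3 ≤ n)
    (Λ : Subalgebra (Polynomial K) (Matrix (Fin n) (Fin n) (RatFunc K)))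
    (hΛ : (Λ : Set (Matrix (Fin n) (Fin n) (RatFunc K))) = lambdaCarrier K n) :
    Nonempty (↥Λ ≃ₗ[↥Λ] (↥Λ →ₗ[Polynomial K] Polynomial K)) ∧
    Module.Projective ↥Λ (↥Λ →ₗ[Polynomial K] Polynomial K) := by
  let e := LinearEquiv.ofBijective (formDualHom Λ (frobeniusForm hΛ))
    (formDual_frobeniusForm_bijective hΛ hn)
  exact ⟨⟨e⟩, .of_equiv e⟩
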